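/- arXiv:2305.05112 — 7 statements merged into one kernel-verified Lean document; each statement's English description precedes it below -/
import Mathlib

section
/- Fix integers t ≥ 1 and 1 ≤ w ≤ t, and a residue class r ∈ ℤ/tℤ. Let F_r = {B ⊆ {1,…,t} : |B| = w and Σ_{i∈B} i ≡ r (mod t)}. Then F_r is a 1-doubly disjunct block design on t vertices; that is, for any two distinct blocks Z, B ∈ F_r, |Z \ B| ≥ 2. -/
/-- The Graham–Sloane family `F_r`: all subsets of `{1,…,t}` of size `w` whose element
sum is congruent to `r` modulo `t`. -/
def grahamSloane (t w : ℕ) (r : ZMod t) : Finset (Finset ℕ) :=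
  (Finset.Icc 1 t).powerset.filter
    (fun B => B.card = w ∧ (∑ i ∈ B, (i : ZMod t)) = r)

lemma cast_inj_Icc (t : ℕ) (ht : 1 ≤ t) {a b : ℕ} (ha : a ∈ Finset.Icc 1 t)
    (hb : b ∈ Finset.Icc 1 t) (h : (a : ZMod t) = (b : ZMod t)) : a = b := by
  simp only [Finset.mem_Icc] at ha hb
  have : NeZero t := ⟨by omega⟩
  have hv : a % t = b % t := by
    have := congrArg ZMod.val h
    rwa [ZMod.val_natCast, ZMod.val_natCast] at this
  rcases eq_or_lt_of_le ha.2 with h1 | h1 <;> rcases eq_or_lt_of_le hb.2 with h2 | h2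
  · omega
  · rw [h1, Nat.mod_self, Nat.mod_eq_of_lt h2] at hv; omega
  · rw [h2, Nat.mod_self, Nat.mod_eq_of_lt h1] at hv; omega
  · rwa [Nat.mod_eq_of_lt h1, Nat.mod_eq_of_lt h2] at hv

/-- For `1 ≤ w ≤ t` and any residue class `r ∈ ℤ/tℤ`, the family `F_r` is a 1-doubly
disjunct block design on `t` vertices: for any two distinct blocks `Z, B ∈ F_r`,
`|Z \ B| ≥ 2`. -/
theorem grahamSloane_one_doubly_disjunct (t w : ℕ) (ht : 1 ≤ t) (hw1 : 1 ≤ w)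
    (hwt : w ≤ t) (r : ZMod t) :
    ∀ Z ∈ grahamSloane t w r, ∀ B ∈ grahamSloane t w r, Z ≠ B → 2 ≤ (Z \ B).card := by
  intro Z hZ B hB hne
  simp only [grahamSloane, Finset.mem_filter, Finset.mem_powerset] at hZ hB
  obtain ⟨hZsub, hZcard, hZsum⟩ := hZ
  obtain ⟨hBsub, hBcard, hBsum⟩ := hB
  by_contra h
  push_neg at h
  interval_cases hc : (Z \ B).card
  · -- Z ⊆ B, same card ⇒ equal
    have : Z ⊆ B := by
      rwa [Finset.card_eq_zero, Finset.sdiff_eq_empty_iff_subset] at hc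
    exact hne (Finset.eq_of_subset_of_card_le this (by omega))
  · -- |Z\B| = 1, so |B\Z| = 1
    have hZB : (Z \ B).card = (B \ Z).card := by
      have h1 := Finset.card_sdiff_add_card_inter Z B
      have h2 := Finset.card_sdiff_add_card_inter B Z
      rw [Finset.inter_comm B Z] at h2
      omega
    obtain ⟨a, ha⟩ := Finset.card_eq_one.mp hc
    obtain ⟨b, hb⟩ := Finset.card_eq_one.mp (hZB ▸ hc)
    have hsZ : ∑ i ∈ Z, (i : ZMod t) = (a : ZMod t) + ∑ i ∈ Z ∩ B, (i : ZMod t) := by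
      rw [← Finset.sum_sdiff (Finset.inter_subset_left (s₂ := B)),
        show Z \ (Z ∩ B) = Z \ B from Finset.sdiff_inter_self_left Z B, ha,
        Finset.sum_singleton]
    have hsB : ∑ i ∈ B, (i : ZMod t) = (b : ZMod t) + ∑ i ∈ Z ∩ B, (i : ZMod t) := by
      rw [← Finset.sum_sdiff (Finset.inter_subset_right (s₁ := Z)),
        show B \ (Z ∩ B) = B \ Z from Finset.sdiff_inter_self_right B Z, hb,
        Finset.sum_singleton]
    have hab : (a : ZMod t) = (b : ZMod t) := by
      have := hsZ.symm.trans (hZsum.trans (hBsum.symm.trans hsB))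
      exact add_right_cancel this
    have haZ : a ∈ Z \ B := ha ▸ Finset.mem_singleton_self a
    have hbB : b ∈ B \ Z := hb ▸ Finset.mem_singleton_self b
    rw [Finset.mem_sdiff] at haZ hbB
    have : a = b := cast_inj_Icc t ht (hZsub haZ.1) (hBsub hbB.1) hab
    exact haZ.2 (this ▸ hbB.1)
end

section
/- Fix integers t ≥ 1 and 1 ≤ w ≤ t. There exists a residue class r ∈ ℤ/tℤ such that the family F_r = {B ⊆ {1,…,t} : |B| = w and Σ_{i∈B} i ≡ r (mod t)} satisfies |F_r| ≥ C(t,w)/t. In particular, there exists a 1-doubly disjunct block design on t vertices consisting of at least C(t,w)/t blocks, each of size w. -/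
lemma mod_eq_of_Icc (t a b : ℕ) (h : a % t = b % t) (ha : 1 ≤ a) (ha2 : a ≤ t)
    (hb : 1 ≤ b) (hb2 : b ≤ t) : a = b := by
  rcases eq_or_lt_of_le ha2 with h1 | h1 <;> rcases eq_or_lt_of_le hb2 with h2 | h2 <;>
    simp_all [Nat.mod_eq_of_lt, Nat.mod_self] <;> omega

/-- Any two distinct blocks of `F_r` differ in at least 2 elements. -/
lemma grahamSloane_disjunct (t w : ℕ) (r : ZMod t)
    (Z : Finset ℕ) (hZ : Z ∈ grahamSloane t w r)
    (B : Finset ℕ) (hB : B ∈ grahamSloane t w r) (hne : Z ≠ B) :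
    2 ≤ (Z \ B).card := by
  simp only [grahamSloane, Finset.mem_filter, Finset.mem_powerset] at hZ hB
  obtain ⟨hZsub, hZcard, hZsum⟩ := hZ
  obtain ⟨hBsub, hBcard, hBsum⟩ := hB
  by_contra h
  push_neg at h
  interval_cases hc : (Z \ B).card
  · -- card 0 : Z ⊆ B, so Z = B
    have hsub : Z ⊆ B := by
      rw [← Finset.sdiff_eq_empty_iff_subset]
      exact Finset.card_eq_zero.mp hc
    exact hne (Finset.eq_of_subset_of_card_le hsub (by omega))
  · -- card 1
    have hc' : (B \ Z).card = 1 := by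
      rw [Finset.card_sdiff_comm (hBcard.trans hZcard.symm)]
      exact hc
    obtain ⟨a, ha⟩ := Finset.card_eq_one.mp hc
    obtain ⟨b, hb⟩ := Finset.card_eq_one.mp hc'
    have haZ : a ∈ Z \ B := ha ▸ Finset.mem_singleton_self a
    have hbB : b ∈ B \ Z := hb ▸ Finset.mem_singleton_self b
    have h1 : (∑ i ∈ Z ∩ B, (i : ZMod t)) + a = ∑ i ∈ Z, (i : ZMod t) := by
      rw [← Finset.sum_inter_add_sum_sdiff Z B (fun i => (i : ZMod t)), ha,
        Finset.sum_singleton]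
    have h2 : (∑ i ∈ Z ∩ B, (i : ZMod t)) + b = ∑ i ∈ B, (i : ZMod t) := by
      rw [Finset.inter_comm, ← Finset.sum_inter_add_sum_sdiff B Z (fun i => (i : ZMod t)),
        hb, Finset.sum_singleton]
    have hab : (a : ZMod t) = b := by
      have h3 := h1.trans (hZsum.trans hBsum.symm)
      rw [← h2] at h3
      exact add_left_cancel h3
    have hmod : a % t = b % t := (ZMod.natCast_eq_natCast_iff a b t).mp hab
    have haI : a ∈ Finset.Icc 1 t := hZsub (Finset.mem_sdiff.mp haZ).1
    have hbI : b ∈ Finset.Icc 1 t := hBsub (Finset.mem_sdiff.mp hbB).1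
    rw [Finset.mem_Icc] at haI hbI
    have hab' : a = b := mod_eq_of_Icc t a b hmod haI.1 haI.2 hbI.1 hbI.2
    exact (Finset.mem_sdiff.mp haZ).2 (hab' ▸ (Finset.mem_sdiff.mp hbB).1)

/-- For `1 ≤ w ≤ t`, some residue class `r ∈ ℤ/tℤ` gives a family `F_r` with at least
`C(t,w)/t` blocks.  In particular, `F_r` is then a 1-doubly disjunct block design on `t`
vertices (any two distinct blocks `Z, B ∈ F_r` satisfy `|Z \ B| ≥ 2`) consisting of at
least `C(t,w)/t` blocks, each of size `w`. -/
theorem grahamSloane_large_class (t w : ℕ) (ht : 1 ≤ t) (hw1 : 1 ≤ w) (hwt : w ≤ t) :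
    ∃ r : ZMod t,
      ((t.choose w : ℝ) / t ≤ (grahamSloane t w r).card) ∧
      (∀ Z ∈ grahamSloane t w r, ∀ B ∈ grahamSloane t w r, Z ≠ B → 2 ≤ (Z \ B).card) ∧
      (∀ B ∈ grahamSloane t w r, B ⊆ Finset.Icc 1 t ∧ B.card = w) := by
  haveI : NeZero t := ⟨by omega⟩
  set S : Finset (Finset ℕ) := Finset.powersetCard w (Finset.Icc 1 t) with hS
  have hScard : S.card = t.choose w := by
    rw [hS, Finset.card_powersetCard, Nat.card_Icc]
    simp
  have hfib : ∀ r : ZMod t, grahamSloane t w r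
      = S.filter (fun B : Finset ℕ => (∑ i ∈ B, (i : ZMod t)) = r) := by
    intro r
    rw [hS, Finset.powersetCard_eq_filter, Finset.filter_filter]
    rfl
  have hsum : ∑ r : ZMod t, (grahamSloane t w r).card = S.card := by
    simp only [hfib]
    exact (Finset.card_eq_sum_card_fiberwise
      (f := fun B : Finset ℕ => ∑ i ∈ B, (i : ZMod t)) (t := Finset.univ)
      (fun B _ => Finset.mem_univ _)).symm
  have hcardZ : Fintype.card (ZMod t) = t := ZMod.card t
  have hne : (Finset.univ : Finset (ZMod t)).Nonempty := Finset.univ_nonempty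
  obtain ⟨r, _, hr⟩ := Finset.exists_le_of_sum_le hne (by
    show ∑ _r : ZMod t, S.card ≤ ∑ r : ZMod t, t * (grahamSloane t w r).card
    rw [Finset.sum_const, Finset.card_univ, hcardZ, smul_eq_mul, ← Finset.mul_sum, hsum])
  refine ⟨r, ?_, fun Z hZ B hB hne' => grahamSloane_disjunct t w r Z hZ B hB hne',
    fun B hB => ?_⟩
  · rw [div_le_iff₀ (by positivity)]
    have h1 : (t.choose w : ℝ) ≤ (t : ℝ) * (grahamSloane t w r).card := by
      rw [← hScard]
      exact_mod_cast hr
    linarith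
  · simp only [grahamSloane, Finset.mem_filter, Finset.mem_powerset] at hB
    exact ⟨hB.1, hB.2.1⟩
end

section
/- Let n, d, w be positive integers with d ≤ n and ⌊n/d⌋ ≤ w ≤ n−1. Then C(n−d, w) / C(n, w+1) ≤ C(n−d, w−1) / C(n, w); that is, the function f(w) = C(n−d, w−1)/C(n, w) is nonincreasing for integer w at or above ⌊n/d⌋. -/
/-- At or above `⌊n/d⌋`, the function `f(w) = C(n−d, w−1)/C(n, w)` is nonincreasing:
for positive integers `w` with `d ≤ n` and `⌊n/d⌋ ≤ w ≤ n−1`,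
`C(n−d, w) / C(n, w+1) ≤ C(n−d, w−1) / C(n, w)`. -/
theorem ratio_antitone_above (n d w : ℕ) (hn : 0 < n) (hd : 0 < d) (hw : 0 < w)
    (hdn : d ≤ n) (hwge : n / d ≤ w) (hwle : w ≤ n - 1) :
    ((n - d).choose w : ℝ) / (n.choose (w + 1))
      ≤ ((n - d).choose (w - 1) : ℝ) / (n.choose w) := by
  rcases le_or_gt w (n - d) with hwm | hwm
  · have hw1 : w + 1 ≤ n := by omega
    have hpos1 : (0:ℝ) < n.choose (w+1) := by exact_mod_cast Nat.choose_pos hw1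
    have hpos2 : (0:ℝ) < n.choose w := by exact_mod_cast Nat.choose_pos (by omega : w ≤ n)
    rw [div_le_div_iff₀ hpos1 hpos2]
    obtain ⟨k, rfl⟩ : ∃ k, w = k + 1 := ⟨w - 1, by omega⟩
    have key : (n-d).choose (k+1) * n.choose (k+1) ≤ (n-d).choose k * n.choose (k+2) := by
      have e1 : (n-d).choose (k+1) * (k+1) = (n-d).choose k * ((n-d) - k) :=
        Nat.choose_succ_right_eq _ _
      have e2 : n.choose (k+2) * (k+2) = n.choose (k+1) * (n - (k+1)) :=
        Nat.choose_succ_right_eq _ _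
      have hmul : n + 1 ≤ d * (k + 2) := by
        have hdm := Nat.div_add_mod n d
        have hmod : n % d < d := Nat.mod_lt n hd
        have h1 : n < (n / d + 1) * d := by nlinarith
        have h2 : (n / d + 1) * d ≤ (k + 2) * d := Nat.mul_le_mul_right d (by omega)
        calc n + 1 ≤ (n/d + 1) * d := h1
          _ ≤ (k+2)*d := h2
          _ = d * (k+2) := Nat.mul_comm _ _
      obtain ⟨b, hb⟩ : ∃ b, n - d = k + 1 + b := ⟨n - d - (k+1), by omega⟩
      have harith : ((n-d) - k) * (k + 2) ≤ (n - (k+1)) * (k + 1) := by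
        have h3 : n - d - k = b + 1 := by omega
        have h4 : n - (k+1) = d + b := by omega
        have hn' : n = d + k + 1 + b := by omega
        rw [h3, h4]
        nlinarith [hmul, hn']
      apply Nat.le_of_mul_le_mul_right (c := (k+1)*(k+2)) _ (by positivity)
      calc (n-d).choose (k+1) * n.choose (k+1) * ((k+1)*(k+2))
          = ((n-d).choose (k+1) * (k+1)) * (n.choose (k+1) * (k+2)) := by ring
        _ = ((n-d).choose k * ((n-d) - k)) * (n.choose (k+1) * (k+2)) := by rw [e1]
        _ = ((n-d).choose k * n.choose (k+1)) * (((n-d) - k) * (k+2)) := by ring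
        _ ≤ ((n-d).choose k * n.choose (k+1)) * ((n - (k+1)) * (k+1)) :=
            Nat.mul_le_mul_left _ harith
        _ = ((n-d).choose k * (n.choose (k+1) * (n - (k+1)))) * (k+1) := by ring
        _ = ((n-d).choose k * (n.choose (k+2) * (k+2))) * (k+1) := by rw [e2]
        _ = (n-d).choose k * n.choose (k+2) * ((k+1)*(k+2)) := by ring
    have : ((n-d).choose (k+1) * n.choose (k+1) : ℝ) ≤ ((n-d).choose k * n.choose (k+2) : ℝ) := by
      exact_mod_cast key
    simpa using this
  · have h0 : (n - d).choose w = 0 := Nat.choose_eq_zero_of_lt hwm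
    rw [h0]
    simp only [Nat.cast_zero, zero_div]
    positivity
end

section
/- Let n, d be positive integers with d ≤ n. Then for every integer w with 1 ≤ w ≤ n, C(n−d, w−1) / C(n, w) ≤ C(n−d, ⌊n/d⌋−1) / C(n, ⌊n/d⌋); that is, the function f(w) = C(n−d, w−1)/C(n, w) attains its maximum over w ∈ {1, …, n} at w = ⌊n/d⌋. -/
/-!
Write `f w = C(m, w-1) / C(n, w)` with `m = n - d`. Pascal's rule gives
`f (w+1) / f w = (m - w + 1)(w + 1) / (w (n - w))`, and this ratio is at least `1` exactly
when `(n + 1) w ≤ (m + 1)(w + 1)`, i.e. when `(w + 1) d ≤ n + 1`. Hence `f` increases on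
`[1, ⌊n/d⌋]` and decreases on `[⌊n/d⌋, n]`.
-/

open Set

theorem isMaxOn_Icc_of_monotoneOn_of_antitoneOn {α β : Type*} [LinearOrder α] [Preorder β]
    {f : α → β} {a p b : α} (hmono : MonotoneOn f (Icc a p)) (hanti : AntitoneOn f (Icc p b))
    (hap : a ≤ p) (hpb : p ≤ b) : IsMaxOn f (Icc a b) p := by
  rw [isMaxOn_iff]
  rintro x ⟨hax, hxb⟩
  rcases le_total x p with hxp | hpx
  · exact hmono ⟨hax, hxp⟩ ⟨hap, le_rfl⟩ hxp
  · exact hanti ⟨le_rfl, hpb⟩ ⟨hpx, hxb⟩ hpx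

noncomputable def chooseRatio (m n w : ℕ) : ℝ := (m.choose (w - 1) : ℝ) / n.choose w

theorem chooseRatio_succ_mul {m n w : ℕ} (hw : 1 ≤ w) (hwn : w < n) :
    chooseRatio m n (w + 1) * (w * (n - w) : ℕ) =
      chooseRatio m n w * ((m - (w - 1)) * (w + 1) : ℕ) := by
  obtain ⟨k, rfl⟩ := Nat.exists_eq_add_of_le' hw
  have hm : (m.choose (k + 1) * (k + 1) : ℝ) = m.choose k * (m - k : ℕ) := by
    exact_mod_cast Nat.choose_succ_right_eq m k
  have hn : (n.choose (k + 2) * (k + 2) : ℝ) = n.choose (k + 1) * (n - (k + 1) : ℕ) := by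
    exact_mod_cast Nat.choose_succ_right_eq n (k + 1)
  have hn₀ : (n.choose (k + 1) : ℝ) ≠ 0 := by positivity [Nat.choose_pos hwn.le]
  have hn₁ : (n.choose (k + 2) : ℝ) ≠ 0 := by positivity [Nat.choose_pos hwn]
  simp only [chooseRatio, Nat.add_sub_cancel]
  field_simp
  push_cast
  linear_combination ((n - (k + 1) : ℕ) * n.choose (k + 1) : ℝ) * hm
    - (m.choose k * (m - k : ℕ) : ℝ) * hn

theorem chooseRatio_nonneg (m n w : ℕ) : 0 ≤ chooseRatio m n w := by
  unfold chooseRatio; positivity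

theorem chooseRatio_le_succ {m n w : ℕ} (hw : 1 ≤ w) (hwn : w < n)
    (h : (n + 1) * w ≤ (m + 1) * (w + 1)) : chooseRatio m n w ≤ chooseRatio m n (w + 1) := by
  have hwm : w - 1 ≤ m := by
    -- otherwise `(n + 1) w ≤ (m + 1)(w + 1) < w (w + 1)` forces `n < w`
    by_contra! hmw
    nlinarith [Nat.sub_add_cancel hw]
  have hfactor : w * (n - w) ≤ (m - (w - 1)) * (w + 1) := by
    zify [hw, hwn.le, hwm]
    nlinarith
  have hpos : (0 : ℝ) < (w * (n - w) : ℕ) := by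
    have : 0 < n - w := Nat.sub_pos_of_lt hwn
    positivity
  refine le_of_mul_le_mul_right ?_ hpos
  rw [chooseRatio_succ_mul hw hwn]
  gcongr
  exact chooseRatio_nonneg m n w

theorem chooseRatio_succ_le {m n w : ℕ} (hw : 1 ≤ w) (hwn : w < n)
    (h : (m + 1) * (w + 1) ≤ (n + 1) * w) : chooseRatio m n (w + 1) ≤ chooseRatio m n w := by
  have hfactor : (m - (w - 1)) * (w + 1) ≤ w * (n - w) := by
    rcases le_total (w - 1) m with hwm | hmw
    · zify [hw, hwn.le, hwm]
      nlinarith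
    · simp [Nat.sub_eq_zero_of_le hmw]
  have hpos : (0 : ℝ) < (w * (n - w) : ℕ) := by
    have : 0 < n - w := Nat.sub_pos_of_lt hwn
    positivity
  refine le_of_mul_le_mul_right ?_ hpos
  rw [chooseRatio_succ_mul hw hwn]
  gcongr
  exact chooseRatio_nonneg m n w

theorem monotoneOn_chooseRatio_sub (n d : ℕ) :
    MonotoneOn (chooseRatio (n - d) n) (Icc 1 (n / d)) := by
  refine monotoneOn_of_le_succ ordConnected_Icc fun w _ hw hw' => ?_
  rw [Order.succ_eq_add_one] at hw' ⊢
  have hwd : (w + 1) * d ≤ n := (Nat.mul_le_mul_right d hw'.2).trans (Nat.div_mul_le_self n d)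
  have hdn : d ≤ n := le_trans (Nat.le_mul_of_pos_left d (Nat.succ_pos w)) hwd
  refine chooseRatio_le_succ hw.1 (hw'.2.trans (Nat.div_le_self n d)) ?_
  zify [hdn]
  nlinarith

theorem antitoneOn_chooseRatio_sub {n d : ℕ} (hd : 0 < d) (hdn : d ≤ n) :
    AntitoneOn (chooseRatio (n - d) n) (Icc (n / d) n) := by
  refine antitoneOn_of_succ_le ordConnected_Icc fun w _ hw hw' => ?_
  rw [Order.succ_eq_add_one] at hw' ⊢
  have hnd : n < d * (w + 1) :=
    (Nat.lt_mul_div_succ n hd).trans_le (Nat.mul_le_mul_left d (Nat.succ_le_succ hw.1))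
  refine chooseRatio_succ_le ((Nat.div_pos hdn hd).trans_le hw.1) hw'.2 ?_
  zify [hdn]
  nlinarith

theorem ratio_max_at_floor_general (n d : ℕ) (hd : 0 < d) (hdn : d ≤ n) :
    ∀ w : ℕ, 1 ≤ w → w ≤ n →
      ((n - d).choose (w - 1) : ℝ) / (n.choose w)
        ≤ ((n - d).choose (n / d - 1) : ℝ) / (n.choose (n / d)) := by
  intro w hw hwn
  have hmax := isMaxOn_Icc_of_monotoneOn_of_antitoneOn (monotoneOn_chooseRatio_sub n d)
    (antitoneOn_chooseRatio_sub hd hdn) (Nat.div_pos hdn hd) (Nat.div_le_self n d)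
  exact isMaxOn_iff.mp hmax w ⟨hw, hwn⟩

/-- The function `f(w) = C(n−d, w−1)/C(n, w)` attains its maximum over `w ∈ {1,…,n}`
at `w = ⌊n/d⌋`. -/
theorem ratio_max_at_floor (n d : ℕ) (hn : 0 < n) (hd : 0 < d) (hdn : d ≤ n) :
    ∀ w : ℕ, 1 ≤ w → w ≤ n →
      ((n - d).choose (w - 1) : ℝ) / (n.choose w)
        ≤ ((n - d).choose (n / d - 1) : ℝ) / (n.choose (n / d)) :=
  ratio_max_at_floor_general n d hd hdn
end

section
/- Let n, d, t be positive integers with d ≤ n and let ε ∈ (0,1). Let μ be a probability distribution on {0,1}^n such that for every choice of pairwise distinct indices i_1, …, i_d ∈ {1,…,n}, μ({v : v_{i_1} = 1 and v_{i_2} = ⋯ = v_{i_d} = 0}) = (4 + 2 ln(d · C(n,d)/ε)) / t. Let the rows s_1, …, s_t of a random t×n binary matrix S be drawn i.i.d. from μ, and for each j ∈ {1,…,n} let B_j = {k ∈ {1,…,t} : S_{kj} = 1}. Then the probability that there exist pairwise distinct indices i_1, …, i_d ∈ {1,…,n} with |B_{i_1} \ (B_{i_2} ∪ ⋯ ∪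 B_{i_d})| ≤ 1 is at most ε. -/
/-!
Union bound over the `d * C(n,d)` pairs `(s, a)` with `s` a `d`-set and `a ∈ s`. For such a pair,
`B a \ ⋃_{b ∈ s, b ≠ a} B b` is the set of rows lying in a fixed event of probability
`p = (4 + 2 L) / t`, `L = ln (d C(n,d) / ε)`, so by independence of the rows it has at most one
element with probability `(1 - p)^t + t p (1 - p)^(t-1) ≤ (1 + t p) e^(1 - t p) ≤ e^(2 - t p / 2)
= e^(-L) = ε / (d C(n,d))`.
-/

open Finset Real

section UnionBound

variable {α ι M : Type*} [DecidableEq α] [AddCommMonoid M] [PartialOrder M]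
  [IsOrderedAddMonoid M] {f : α → M}

theorem sum_union_le_of_nonneg (hf : ∀ x, 0 ≤ f x) (s t : Finset α) :
    ∑ x ∈ s ∪ t, f x ≤ ∑ x ∈ s, f x + ∑ x ∈ t, f x := by
  rw [← sum_union_inter]
  exact le_add_of_nonneg_right (sum_nonneg fun x _ => hf x)

theorem sum_biUnion_le_of_nonneg (hf : ∀ x, 0 ≤ f x) (s : Finset ι) (t : ι → Finset α) :
    ∑ x ∈ s.biUnion t, f x ≤ ∑ i ∈ s, ∑ x ∈ t i, f x :=
  sup_eq_biUnion s t ▸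
    s.apply_sup_le_sum (f := fun u => ∑ x ∈ u, f x) sum_empty (sum_union_le_of_nonneg hf _ _)

end UnionBound

theorem one_sub_pow_add_mul_pow_le_exp {p : ℝ} (hp0 : 0 ≤ p) (hp1 : p ≤ 1) (t : ℕ) :
    (1 - p) ^ t + t * p * (1 - p) ^ (t - 1) ≤ exp (2 - t * p / 2) := by
  have hq : 0 ≤ 1 - p := by linarith
  have htp : 0 ≤ (t : ℝ) * p := by positivity
  have ht : (t : ℝ) ≤ (t - 1 : ℕ) + 1 := by norm_cast; omega
  have hpow : (1 - p) ^ (t - 1) ≤ exp (1 - t * p) :=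
    calc (1 - p) ^ (t - 1) ≤ exp (-p) ^ (t - 1) := by
          gcongr; linarith [add_one_le_exp (-p)]
      _ = exp (-((t - 1 : ℕ) * p)) := by rw [← exp_nat_mul]; ring_nf
      _ ≤ exp (1 - t * p) := by gcongr; nlinarith
  -- `e ≥ 2` and `exp (x / 2) ≥ 1 + x / 2`
  have hexp : 1 + t * p ≤ exp (1 + t * p / 2) := by
    rw [exp_add]
    nlinarith [add_one_le_exp 1, add_one_le_exp (t * p / 2), exp_pos (t * p / 2)]
  calc (1 - p) ^ t + t * p * (1 - p) ^ (t - 1) ≤ (1 + t * p) * (1 - p) ^ (t - 1) := by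
        nlinarith [pow_le_pow_of_le_one hq (by linarith) (Nat.sub_le t 1), pow_nonneg hq (t - 1)]
    _ ≤ exp (1 + t * p / 2) * exp (1 - t * p) := by gcongr
    _ = exp (2 - t * p / 2) := by rw [← exp_add]; ring_nf

section IIDRows

variable {X : Type*} [Fintype X] [DecidableEq X] {t : ℕ} (μ : X → ℝ)

omit [Fintype X] [DecidableEq X] in
theorem sum_piFinset_update_const (B C : Finset X) (k₀ : Fin t) :
    ∑ S ∈ Fintype.piFinset (Function.update (fun _ => C) k₀ B), ∏ k, μ (S k)
      = (∑ x ∈ B, μ x) * (∑ x ∈ C, μ x) ^ (t - 1) := by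
  rw [← prod_univ_sum]
  simp_rw [Function.apply_update (fun _ (A : Finset X) => ∑ x ∈ A, μ x)]
  rw [prod_update_of_mem (mem_univ k₀), prod_const, card_sdiff, card_univ, Fintype.card_fin]
  simp

theorem filter_card_filter_mem_le_one_subset (B : Finset X) :
    (univ.filter fun S : Fin t → X => #{k | S k ∈ B} ≤ 1)
      ⊆ Fintype.piFinset (fun _ => Bᶜ)
        ∪ univ.biUnion fun k₀ => Fintype.piFinset (Function.update (fun _ => Bᶜ) k₀ B) := by
  intro S hS
  simp only [mem_filter, mem_univ, true_and, card_le_one] at hS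
  by_cases h : ∃ k₀, S k₀ ∈ B
  · obtain ⟨k₀, hk₀⟩ := h
    refine mem_union_right _ (mem_biUnion.2 ⟨k₀, mem_univ _, Fintype.mem_piFinset.2 fun k => ?_⟩)
    rcases eq_or_ne k k₀ with rfl | hk
    · simpa using hk₀
    · simpa [hk] using fun hkB => hk (hS k (by simpa) k₀ (by simpa))
  · push Not at h
    exact mem_union_left _ (Fintype.mem_piFinset.2 fun k => by simpa using h k)

theorem sum_card_filter_mem_le_one_le (hμ0 : ∀ x, 0 ≤ μ x) (hμ1 : ∑ x, μ x = 1) (B : Finset X) :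
    ∑ S : Fin t → X with #{k | S k ∈ B} ≤ 1, ∏ k, μ (S k)
      ≤ (1 - ∑ x ∈ B, μ x) ^ t + t * (∑ x ∈ B, μ x) * (1 - ∑ x ∈ B, μ x) ^ (t - 1) := by
  have hw : ∀ S : Fin t → X, 0 ≤ ∏ k, μ (S k) := fun S => prod_nonneg fun k _ => hμ0 _
  have hcompl : ∑ x ∈ Bᶜ, μ x = 1 - ∑ x ∈ B, μ x := by
    rw [← hμ1, ← sum_compl_add_sum B]; ring
  calc ∑ S : Fin t → X with #{k | S k ∈ B} ≤ 1, ∏ k, μ (S k)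
      ≤ ∑ S ∈ Fintype.piFinset (fun _ => Bᶜ), ∏ k, μ (S k)
          + ∑ k₀, ∑ S ∈ Fintype.piFinset (Function.update (fun _ => Bᶜ) k₀ B), ∏ k, μ (S k) :=
        (sum_le_sum_of_subset_of_nonneg (filter_card_filter_mem_le_one_subset B)
          fun S _ _ => hw S).trans <| (sum_union_le_of_nonneg hw _ _).trans <|
            add_le_add_right (sum_biUnion_le_of_nonneg hw _ _) _
    _ = _ := by
        rw [← prod_univ_sum]
        simp_rw [sum_piFinset_update_const, hcompl]
        simp [mul_assoc]

theorem sum_card_filter_mem_le_one_le_exp_neg (hμ0 : ∀ x, 0 ≤ μ x) (hμ1 : ∑ x, μ x = 1)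
    (ht : 0 < t) {B : Finset X} {L : ℝ} (hB : ∑ x ∈ B, μ x = (4 + 2 * L) / t) :
    ∑ S : Fin t → X with #{k | S k ∈ B} ≤ 1, ∏ k, μ (S k) ≤ exp (-L) := by
  have hp0 : 0 ≤ ∑ x ∈ B, μ x := sum_nonneg fun x _ => hμ0 x
  have hp1 : ∑ x ∈ B, μ x ≤ 1 := hμ1 ▸ sum_le_univ_sum_of_nonneg hμ0
  have htp : t * ∑ x ∈ B, μ x = 4 + 2 * L := by rw [hB]; field_simp
  refine (sum_card_filter_mem_le_one_le μ hμ0 hμ1 B).trans <|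
    (one_sub_pow_add_mul_pow_le_exp hp0 hp1 t).trans_eq ?_
  rw [htp]
  ring_nf

end IIDRows

section Indexing

variable {α ι : Type*} [DecidableEq α]

theorem forall_ne_imp_iff_forall_mem_erase_image [Fintype ι] {i : ι → α}
    (hi : Function.Injective i) (j₀ : ι) {P : α → Prop} :
    (∀ j, j ≠ j₀ → P (i j)) ↔ ∀ b ∈ (univ.image i).erase (i j₀), P b := by
  simp only [mem_erase, mem_image, mem_univ, true_and]
  constructor
  · rintro h b ⟨hb, j, rfl⟩
    exact h j (ne_of_apply_ne i hb)
  · exact fun h j hj => h (i j) ⟨hi.ne hj, j, rfl⟩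

theorem exists_injective_apply_eq_image_univ_eq [Fintype ι] [DecidableEq ι] {s : Finset α}
    (hs : #s = Fintype.card ι) {a : α} (ha : a ∈ s) (j₀ : ι) :
    ∃ i : ι → α, Function.Injective i ∧ i j₀ = a ∧ univ.image i = s := by
  let e : ι ≃ s := Fintype.equivOfCardEq (by simp [hs])
  let σ : ι ≃ s := (Equiv.swap j₀ (e.symm ⟨a, ha⟩)).trans e
  refine ⟨fun j => σ j, Subtype.val_injective.comp σ.injective, by simp [σ], ?_⟩
  ext b
  simp only [mem_image, mem_univ, true_and]
  exact ⟨fun ⟨j, hj⟩ => hj ▸ (σ j).2, fun hb => ⟨σ.symm ⟨b, hb⟩, by simp⟩⟩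

end Indexing

section Rows

variable {α κ ι : Type*} [Fintype α] [DecidableEq α] [Fintype κ] [DecidableEq κ] [Fintype ι]
  [DecidableEq ι]

/-- A row `S k` lies in `isolatingRows a U` iff `k ∈ B a \ ⋃_{b ∈ U} B b`. -/
def isolatingRows (a : α) (U : Finset α) : Finset (α → Bool) :=
  {v | v a = true ∧ ∀ b ∈ U, v b = false}

theorem filter_sdiff_biUnion_eq_filter_mem_isolatingRows (S : κ → α → Bool) {i : ι → α}
    (hi : Function.Injective i) (j₀ : ι) :
    (({k | S k (i j₀) = true} : Finset κ) \ univ.biUnion fun j =>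
        if j = j₀ then ∅ else ({k | S k (i j) = true} : Finset κ))
      = ({k | S k ∈ isolatingRows (i j₀) ((univ.image i).erase (i j₀))} : Finset κ) := by
  ext k
  simp only [isolatingRows, mem_sdiff, mem_filter, mem_univ, true_and, mem_biUnion,
    ← forall_ne_imp_iff_forall_mem_erase_image hi]
  refine and_congr_right fun _ => ?_
  simp [apply_ite (k ∈ ·)]

theorem exists_card_filter_mem_isolatingRows_le (S : κ → α → Bool) {i : ι → α}
    (hi : Function.Injective i) (j₀ : ι) {m : ℕ}
    (h : #(({k | S k (i j₀) = true} : Finset κ) \ univ.biUnion fun j =>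
        if j = j₀ then ∅ else ({k | S k (i j) = true} : Finset κ)) ≤ m) :
    ∃ s ∈ powersetCard (Fintype.card ι) univ, ∃ a ∈ s,
      #{k | S k ∈ isolatingRows a (s.erase a)} ≤ m := by
  rw [filter_sdiff_biUnion_eq_filter_mem_isolatingRows S hi] at h
  refine ⟨univ.image i, ?_, i j₀, mem_image_of_mem _ (mem_univ _), h⟩
  simp [mem_powersetCard, card_image_of_injective _ hi]

theorem sum_isolatingRows_erase_eq (μ : (α → Bool) → ℝ) (j₀ : ι) {c : ℝ}
    (hμ : ∀ i : ι → α, Function.Injective i →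
      ∑ v ∈ univ.filter (fun v : α → Bool =>
          v (i j₀) = true ∧ ∀ j, j ≠ j₀ → v (i j) = false), μ v = c)
    {s : Finset α} (hs : #s = Fintype.card ι) {a : α} (ha : a ∈ s) :
    ∑ v ∈ isolatingRows a (s.erase a), μ v = c := by
  obtain ⟨i, hi, rfl, rfl⟩ := exists_injective_apply_eq_image_univ_eq hs ha j₀
  rw [← hμ i hi]
  congr 1
  ext v
  simp only [isolatingRows, mem_filter, mem_univ, true_and,
    ← forall_ne_imp_iff_forall_mem_erase_image hi]

end Rows

open Classical in
theorem prob_not_doubly_disjunct_le_general (n d t : ℕ) (hd : 0 < d) (ht : 0 < t)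
    (hdn : d ≤ n) (ε : ℝ) (hε0 : 0 < ε)
    (μ : (Fin n → Bool) → ℝ) (hμ0 : ∀ v, 0 ≤ μ v)
    (hμ1 : (∑ v : Fin n → Bool, μ v) = 1)
    (hμ : ∀ i : Fin d → Fin n, Function.Injective i →
      (∑ v ∈ Finset.univ.filter (fun v : Fin n → Bool =>
          v (i ⟨0, hd⟩) = true ∧ ∀ j : Fin d, j ≠ ⟨0, hd⟩ → v (i j) = false),
        μ v) = (4 + 2 * Real.log (d * n.choose d / ε)) / t) :
    (∑ S : Fin t → Fin n → Bool,
      if ∃ i : Fin d → Fin n, Function.Injective i ∧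
          ((Finset.univ.filter fun k => S k (i ⟨0, hd⟩) = true) \
            Finset.univ.biUnion (fun j : Fin d =>
              if j = ⟨0, hd⟩ then ∅
              else Finset.univ.filter fun k => S k (i j) = true)).card ≤ 1
      then ∏ k : Fin t, μ (S k) else 0) ≤ ε := by
  set M : ℝ := d * n.choose d
  have hM : 0 < M := by have := Nat.choose_pos hdn; positivity
  have hw : ∀ S : Fin t → Fin n → Bool, 0 ≤ ∏ k, μ (S k) := fun S => prod_nonneg fun k _ => hμ0 _
  have hbad : ∀ s ∈ powersetCard d univ, ∀ a ∈ s,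
      ∑ S : Fin t → Fin n → Bool with #{k | S k ∈ isolatingRows a (s.erase a)} ≤ 1,
        ∏ k, μ (S k) ≤ ε / M := fun s hs a ha => by
    have hrow := sum_isolatingRows_erase_eq μ (⟨0, hd⟩ : Fin d)
      (fun i hi => by convert hμ i hi) (by simpa using (mem_powersetCard.1 hs).2) ha
    refine (sum_card_filter_mem_le_one_le_exp_neg μ hμ0 hμ1 ht hrow).trans_eq ?_
    rw [exp_neg, exp_log (by positivity), inv_div]
  rw [← sum_filter]
  calc _ ≤ ∑ S ∈ (powersetCard d univ).biUnion fun s => s.biUnion fun a =>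
          {S : Fin t → Fin n → Bool | #{k | S k ∈ isolatingRows a (s.erase a)} ≤ 1},
          ∏ k, μ (S k) := by
        refine sum_le_sum_of_subset_of_nonneg (fun S hS => ?_) fun S _ _ => hw S
        obtain ⟨i, hi, hcard⟩ := (mem_filter.1 hS).2
        obtain ⟨s, hs, a, ha, hsa⟩ := exists_card_filter_mem_isolatingRows_le S hi _ hcard
        exact mem_biUnion.2 ⟨s, by simpa using hs, mem_biUnion.2 ⟨a, ha, by simpa using hsa⟩⟩
    _ ≤ ∑ s ∈ powersetCard d univ, ∑ a ∈ s,
          ∑ S : Fin t → Fin n → Bool with #{k | S k ∈ isolatingRows a (s.erase a)} ≤ 1,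
          ∏ k, μ (S k) :=
        (sum_biUnion_le_of_nonneg hw _ _).trans
          (sum_le_sum fun s _ => sum_biUnion_le_of_nonneg hw _ _)
    _ ≤ ∑ s ∈ powersetCard d univ, ∑ a ∈ s, ε / M :=
        sum_le_sum fun s hs => sum_le_sum fun a ha => hbad s hs a ha
    _ = ε := by
        rw [sum_congr rfl fun s hs => by rw [sum_const, (mem_powersetCard.1 hs).2]]
        have := (Nat.choose_pos hdn).ne'
        simp only [nsmul_eq_mul, sum_const, card_powersetCard, card_univ, Fintype.card_fin, M]
        field_simp

open Classical in
/-- Let the rows of a random `t × n` binary matrix `S` be drawn i.i.d. from a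
distribution `μ` on `{0,1}^n` which gives every event
`{v : v_{i 0} = 1, v_{i j} = 0 (j ≠ 0)}` (for pairwise distinct indices `i 0, …,
i (d-1)`) probability `(4 + 2 ln(d·C(n,d)/ε))/t`.  With `B j = {k : S k j = 1}`, the
probability that some pairwise distinct indices `i 0, …, i (d-1)` satisfy
`|B (i 0) \ (B (i 1) ∪ ⋯ ∪ B (i (d-1)))| ≤ 1` is at most `ε`. -/
theorem prob_not_doubly_disjunct_le (n d t : ℕ) (hn : 0 < n) (hd : 0 < d) (ht : 0 < t)
    (hdn : d ≤ n) (ε : ℝ) (hε0 : 0 < ε) (hε1 : ε < 1)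
    (μ : (Fin n → Bool) → ℝ) (hμ0 : ∀ v, 0 ≤ μ v)
    (hμ1 : (∑ v : Fin n → Bool, μ v) = 1)
    (hμ : ∀ i : Fin d → Fin n, Function.Injective i →
      (∑ v ∈ Finset.univ.filter (fun v : Fin n → Bool =>
          v (i ⟨0, hd⟩) = true ∧ ∀ j : Fin d, j ≠ ⟨0, hd⟩ → v (i j) = false),
        μ v) = (4 + 2 * Real.log (d * n.choose d / ε)) / t) :
    (∑ S : Fin t → Fin n → Bool,
      if ∃ i : Fin d → Fin n, Function.Injective i ∧
          ((Finset.univ.filter fun k => S k (i ⟨0, hd⟩) = true) \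
            Finset.univ.biUnion (fun j : Fin d =>
              if j = ⟨0, hd⟩ then ∅
              else Finset.univ.filter fun k => S k (i j) = true)).card ≤ 1
      then ∏ k : Fin t, μ (S k) else 0) ≤ ε :=
  prob_not_doubly_disjunct_le_general n d t hd ht hdn ε hε0 μ hμ0 hμ1 hμ
end

section
/- Let n, d, t be positive integers with d ≤ n and let ε ∈ (0,1]. Set L = ln(d · C(n,d)/ε) and p = (4 + 2L)/t, and assume p ≤ 1. Then d · C(n,d) · ((1−p)^t + t·p·(1−p)^{t−1}) ≤ ε; that is, the union bound over all d · C(n,d) choices of a distinguished block within a size-d subset of blocks, applied to the probability that a Binomial(t, p) random variable is at most 1, is at most ε. -/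
/-- With `L = ln(d·C(n,d)/ε)` and `p = (4 + 2L)/t ≤ 1`, the union bound over all
`d·C(n,d)` choices of a distinguished block in a size-`d` subset, applied to
`P(Binomial(t,p) ≤ 1) = (1−p)^t + t·p·(1−p)^{t−1}`, is at most `ε`. -/
theorem union_bound_binomial (n d t : ℕ) (hn : 0 < n) (hd : 0 < d) (ht : 0 < t)
    (hdn : d ≤ n) (ε : ℝ) (hε0 : 0 < ε) (hε1 : ε ≤ 1) (L p : ℝ)
    (hL : L = Real.log (d * n.choose d / ε)) (hp : p = (4 + 2 * L) / t) (hp1 : p ≤ 1) :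
    (d : ℝ) * n.choose d * ((1 - p) ^ t + t * p * (1 - p) ^ (t - 1)) ≤ ε := by
  have hd1 : (1:ℝ) ≤ (d:ℝ) := by exact_mod_cast hd
  have hc1 : (1:ℝ) ≤ (n.choose d : ℝ) := by exact_mod_cast Nat.choose_pos hdn
  have hM1 : (1:ℝ) ≤ (d : ℝ) * n.choose d := by nlinarith
  have hMpos : (0:ℝ) < (d : ℝ) * n.choose d := by linarith
  have hL0 : 0 ≤ L := by
    rw [hL]
    apply Real.log_nonneg
    rw [le_div_iff₀ hε0]
    linarith
  have ht' : (0:ℝ) < t := by exact_mod_cast ht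
  have hp0 : 0 < p := by
    rw [hp]; apply div_pos (by linarith) ht'
  have hpt : p * t = 4 + 2 * L := by
    rw [hp]; field_simp
  have h1p : 0 ≤ 1 - p := by linarith
  have hexp : 1 - p ≤ Real.exp (-p) := by
    have := Real.add_one_le_exp (-p); linarith
  have hpowt : (1 - p) ^ t ≤ Real.exp (-(p * t)) := by
    calc (1 - p) ^ t ≤ Real.exp (-p) ^ t := pow_le_pow_left₀ h1p hexp t
      _ = Real.exp (-(p * t)) := by
          rw [← Real.exp_nat_mul]; ring_nf
  have hpowt1 : (1 - p) ^ (t - 1) ≤ Real.exp (-(p * t)) * Real.exp 1 := by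
    have hcast : ((t - 1 : ℕ) : ℝ) = (t : ℝ) - 1 := by
      have : (1:ℕ) ≤ t := ht
      push_cast [Nat.cast_sub this]; ring
    calc (1 - p) ^ (t - 1) ≤ Real.exp (-p) ^ (t - 1) := pow_le_pow_left₀ h1p hexp _
      _ = Real.exp (((t - 1 : ℕ) : ℝ) * (-p)) := by rw [Real.exp_nat_mul]
      _ = Real.exp (-(p * t) + p) := by rw [hcast]; ring_nf
      _ ≤ Real.exp (-(p * t)) * Real.exp 1 := by
          rw [← Real.exp_add]; exact Real.exp_le_exp.mpr (by linarith)
  have hMeq : (d : ℝ) * n.choose d = ε * Real.exp L := by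
    have h : Real.exp L = (d : ℝ) * n.choose d / ε := by
      rw [hL, Real.exp_log (by positivity)]
    rw [h]; field_simp
  set e1 := Real.exp 1 with he1
  have he1lb : (2.7182818283 : ℝ) < e1 := Real.exp_one_gt_d9
  have he1ub : e1 < 2.7182818286 := Real.exp_one_lt_d9
  have hkey : 1 + e1 * (4 + 2 * L) ≤ Real.exp (4 + L) := by
    have h4 : Real.exp (4 + L) = e1 ^ 4 * Real.exp L := by
      rw [show (4:ℝ) + L = 1 + 1 + 1 + 1 + L by ring]
      simp [Real.exp_add]; ring
    have hexpL : 1 + L ≤ Real.exp L := by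
      have := Real.add_one_le_exp L; linarith
    have he1lb' : (2.718:ℝ) < e1 := by linarith
    have he1ub' : e1 < (2.72:ℝ) := by linarith
    have hq : (7.38:ℝ) ≤ e1 ^ 2 := by nlinarith
    have he14 : (54:ℝ) ≤ e1 ^ 4 := by nlinarith [hq, sq_nonneg (e1 ^ 2 - 7.38)]
    have hepos : (0:ℝ) < e1 := by linarith
    have hL1 : e1 * L ≤ 2.72 * L := mul_le_mul_of_nonneg_right he1ub'.le hL0
    have hL2 : 54 * (1 + L) ≤ e1 ^ 4 * (1 + L) :=
      mul_le_mul_of_nonneg_right he14 (by linarith)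
    have hL3 : e1 ^ 4 * (1 + L) ≤ e1 ^ 4 * Real.exp L :=
      mul_le_mul_of_nonneg_left hexpL (by positivity)
    have hstep : 1 + e1 * (4 + 2 * L) ≤ 54 * (1 + L) := by linarith
    linarith [h4.ge, hstep, hL2, hL3]
  -- combine
  have hbound : (1 - p) ^ t + t * p * (1 - p) ^ (t - 1)
      ≤ Real.exp (-(4 + 2 * L)) * (1 + e1 * (4 + 2 * L)) := by
    have htp : (t : ℝ) * p = 4 + 2 * L := by rw [mul_comm]; exact hpt
    have h2 : (t : ℝ) * p * (1 - p) ^ (t - 1)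
        ≤ (4 + 2 * L) * (Real.exp (-(p * t)) * e1) := by
      rw [htp]
      exact mul_le_mul_of_nonneg_left hpowt1 (by linarith)
    have h3 : -(p * t) = -(4 + 2 * L) := by rw [hpt]
    rw [h3] at hpowt h2
    have hr : Real.exp (-(4 + 2 * L)) * (1 + e1 * (4 + 2 * L))
        = Real.exp (-(4 + 2 * L)) + (4 + 2 * L) * (Real.exp (-(4 + 2 * L)) * e1) := by
      ring
    linarith [hpowt, h2]
  calc (d : ℝ) * n.choose d * ((1 - p) ^ t + t * p * (1 - p) ^ (t - 1))
      ≤ (d : ℝ) * n.choose d * (Real.exp (-(4 + 2 * L)) * (1 + e1 * (4 + 2 * L))) := by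
        apply mul_le_mul_of_nonneg_left hbound (le_of_lt hMpos)
    _ = ε * (Real.exp L * Real.exp (-(4 + 2 * L)) * (1 + e1 * (4 + 2 * L))) := by
        rw [hMeq]; ring
    _ = ε * (Real.exp (-(4 + L)) * (1 + e1 * (4 + 2 * L))) := by
        rw [← Real.exp_add]; ring_nf
    _ ≤ ε * 1 := by
        have hpos := Real.exp_pos (-(4 + L))
        have h1 : Real.exp (-(4 + L)) * (1 + e1 * (4 + 2 * L))
            ≤ Real.exp (-(4 + L)) * Real.exp (4 + L) :=
          mul_le_mul_of_nonneg_left hkey (le_of_lt hpos)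
        have h2 : Real.exp (-(4 + L)) * Real.exp (4 + L) = 1 := by
          rw [← Real.exp_add, show -(4 + L) + (4 + L) = 0 by ring, Real.exp_zero]
        apply mul_le_mul_of_nonneg_left _ (le_of_lt hε0)
        linarith
    _ = ε := mul_one ε
end

section
/- Let n ≥ d ≥ 2 and t be positive integers and let ε ∈ (0,1), and suppose t > 2e(d² ln(ne/d) + d ln(d/ε) + 2d). Then there exists a probability distribution μ on {0,1}^n assigning probability 0 to the all-zero vector such that, if the rows of a random t×n binary matrix S are drawn i.i.d. from μ and B_j = {k ∈ {1,…,t} : S_{kj} = 1} for j ∈ {1,…,n}, the probability that there exist pairwise distinct indices i_1, …, i_d ∈ {1,…,n} with |B_{i_1} \ (B_{i_2} ∪ ⋯ ∪ B_{i_d})| ≤ 1 (i.e., the probability that the column design of S fails to be (d−1)-doubly disjunct in the indexed sense) is at most ε. -/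
/-!
Take for `μ` the product of independent Bernoulli(1/d) coordinates, with the mass of the zero
vector moved onto the all-ones vector. The design fails only if, for some column `a` and some
set `T` of `d - 1` other columns, at most one row of `S` is `1` at `a` and `0` on `T`. A row
does this with probability `p = (1/d)(1 - 1/d)^(d-1) ≥ 1/(ed)` (the moved mass never lands on
such a row), independently of the other rows, so the binomial tail gives
`(1-p)^t + tp(1-p)^(t-1) ≤ (1 + 2pt) e^(-pt) ≤ e^(2 - pt/2)`. A union bound over the
`n·C(n-1, d-1) = d·C(n, d) ≤ d (ne/d)^d` pairs `(a, T)` and the lower bound on `t` finish.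
-/

open Finset Real

namespace DoublyDisjunct

lemma sum_ite_le_sum_sum_ite {β γ : Type*} (s : Finset β) (Y : Finset γ) {w : β → ℝ}
    (hw : ∀ x, 0 ≤ w x) {P : β → Prop} {Q : γ → β → Prop} [DecidablePred P]
    [∀ y, DecidablePred (Q y)] (hPQ : ∀ x, P x → ∃ y ∈ Y, Q y x) :
    ∑ x ∈ s, (if P x then w x else 0) ≤ ∑ y ∈ Y, ∑ x ∈ s, (if Q y x then w x else 0) := by
  rw [sum_comm]
  refine sum_le_sum fun x _ => ?_
  have hnonneg : ∀ y ∈ Y, 0 ≤ if Q y x then w x else 0 := fun y _ => by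
    split_ifs
    exacts [hw x, le_rfl]
  split_ifs with hP
  · obtain ⟨y, hy, hQ⟩ := hPQ x hP
    exact (if_pos hQ).symm.le.trans (single_le_sum hnonneg hy)
  · exact sum_nonneg hnonneg

section RowCount

variable {α : Type*} [Fintype α] [DecidableEq α] {ν : α → ℝ} {t : ℕ}

lemma sum_prod_filter_mem_eq (hν : ∑ v, ν v = 1) (A : Finset α) (G : Finset (Fin t)) :
    ∑ S : Fin t → α, (if ({k | S k ∈ A} : Finset (Fin t)) = G then ∏ k, ν (S k) else 0)
      = (∑ v ∈ A, ν v) ^ #G * (1 - ∑ v ∈ A, ν v) ^ (t - #G) := by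
  have hAc : ∑ v ∈ Aᶜ, ν v = 1 - ∑ v ∈ A, ν v := by
    rw [← hν, ← sum_compl_add_sum A]; ring
  set C : Fin t → Finset α := fun k => if k ∈ G then A else Aᶜ
  have hC : ∀ S : Fin t → α, ({k | S k ∈ A} : Finset (Fin t)) = G ↔ S ∈ Fintype.piFinset C := by
    intro S
    simp only [Finset.ext_iff, mem_filter_univ, Fintype.mem_piFinset, C]
    refine forall_congr' fun k => ?_
    by_cases hk : k ∈ G <;> simp [hk]
  rw [← sum_filter, filter_congr fun S _ => hC S, filter_mem_eq_inter, univ_inter,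
    ← prod_univ_sum]
  simp only [C, apply_ite (fun s => ∑ v ∈ s, ν v), hAc]
  rw [prod_ite, prod_const, prod_const, filter_mem_eq_inter, univ_inter, filter_not,
    filter_mem_eq_inter, univ_inter, ← compl_eq_univ_sdiff, card_compl, Fintype.card_fin]

lemma sum_prod_card_filter_mem_eq (hν : ∑ v, ν v = 1) (A : Finset α) (j : ℕ) :
    ∑ S : Fin t → α, (if #{k | S k ∈ A} = j then ∏ k, ν (S k) else 0)
      = t.choose j * (∑ v ∈ A, ν v) ^ j * (1 - ∑ v ∈ A, ν v) ^ (t - j) := by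
  calc ∑ S : Fin t → α, (if #{k | S k ∈ A} = j then ∏ k, ν (S k) else 0)
      = ∑ S : Fin t → α, ∑ G ∈ powersetCard j univ,
          (if ({k | S k ∈ A} : Finset (Fin t)) = G then ∏ k, ν (S k) else 0) := by
        refine sum_congr rfl fun S _ => ?_
        rw [sum_ite_eq]
        simp [mem_powersetCard]
    _ = ∑ G ∈ powersetCard j (univ : Finset (Fin t)),
          (∑ v ∈ A, ν v) ^ j * (1 - ∑ v ∈ A, ν v) ^ (t - j) := by
        rw [sum_comm]
        refine sum_congr rfl fun G hG => ?_
        rw [sum_prod_filter_mem_eq hν, (mem_powersetCard.1 hG).2]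
    _ = _ := by
        rw [sum_const, card_powersetCard, card_univ, Fintype.card_fin, nsmul_eq_mul, mul_assoc]

lemma sum_prod_card_filter_mem_le_one (hν : ∑ v, ν v = 1) (A : Finset α) :
    ∑ S : Fin t → α, (if #{k | S k ∈ A} ≤ 1 then ∏ k, ν (S k) else 0)
      = (1 - ∑ v ∈ A, ν v) ^ t + t * (∑ v ∈ A, ν v) * (1 - ∑ v ∈ A, ν v) ^ (t - 1) := by
  have hsplit : ∀ S : Fin t → α, (if #{k | S k ∈ A} ≤ 1 then ∏ k, ν (S k) else 0)
      = (if #{k | S k ∈ A} = 0 then ∏ k, ν (S k) else 0)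
        + (if #{k | S k ∈ A} = 1 then ∏ k, ν (S k) else 0) := by
    intro S
    split_ifs <;> first | omega | simp
  rw [sum_congr rfl fun S _ => hsplit S, sum_add_distrib, sum_prod_card_filter_mem_eq hν,
    sum_prod_card_filter_mem_eq hν]
  simp

end RowCount

section Distribution

variable {α : Type*} [DecidableEq α]

def transferMass (ν : α → ℝ) (z w : α) (v : α) : ℝ :=
  if v = z then 0 else if v = w then ν w + ν z else ν v

variable {ν : α → ℝ} {z w : α}

lemma transferMass_nonneg (hν : ∀ v, 0 ≤ ν v) (v : α) : 0 ≤ transferMass ν z w v := by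
  unfold transferMass
  split_ifs
  exacts [le_rfl, add_nonneg (hν w) (hν z), hν v]

lemma transferMass_self : transferMass ν z w z = 0 := if_pos rfl

lemma transferMass_of_ne {v : α} (hz : v ≠ z) (hw : v ≠ w) : transferMass ν z w v = ν v := by
  rw [transferMass, if_neg hz, if_neg hw]

lemma sum_transferMass [Fintype α] (hzw : z ≠ w) : ∑ v, transferMass ν z w v = ∑ v, ν v := by
  have hshift : ∀ v, transferMass ν z w v
      = ν v + (if v = w then ν z else 0) - (if v = z then ν z else 0) := by
    intro v
    unfold transferMass
    by_cases hvz : v = z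
    · subst hvz; simp [hzw]
    by_cases hvw : v = w
    · subst hvw; simp [hvz]
    · simp [hvz, hvw]
  simp [hshift, sum_add_distrib, sum_sub_distrib]

end Distribution

section Bernoulli

variable {ι : Type*} [Fintype ι]

def bernoulliVec (q : ℝ) (v : ι → Bool) : ℝ := ∏ j, if v j then q else 1 - q

lemma bernoulliVec_nonneg {q : ℝ} (hq₀ : 0 ≤ q) (hq₁ : q ≤ 1) (v : ι → Bool) :
    0 ≤ bernoulliVec q v :=
  prod_nonneg fun j _ => by split_ifs <;> linarith

variable [DecidableEq ι]

lemma sum_bernoulliVec (q : ℝ) : ∑ v : ι → Bool, bernoulliVec q v = 1 := by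
  simpa [bernoulliVec] using
    (Fintype.prod_sum fun (_ : ι) (b : Bool) => if b then q else 1 - q).symm

def separatingVectors (a : ι) (T : Finset ι) : Finset (ι → Bool) :=
  {v | v a = true ∧ ∀ b ∈ T, v b = false}

lemma sum_bernoulliVec_separatingVectors (q : ℝ) {a : ι} {T : Finset ι} (ha : a ∉ T) :
    ∑ v ∈ separatingVectors a T, bernoulliVec q v = q * (1 - q) ^ #T := by
  set C : ι → Finset Bool := fun j => if j = a then {true} else if j ∈ T then {false} else univ
  have hC : separatingVectors a T = Fintype.piFinset C := by
    ext v
    simp only [separatingVectors, mem_filter_univ, Fintype.mem_piFinset, C]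
    constructor
    · rintro ⟨hva, hvT⟩ j
      by_cases hja : j = a
      · simp [hja, hva]
      · by_cases hjT : j ∈ T <;> simp [hja, hjT, hvT]
    · intro hv
      refine ⟨by simpa using hv a, fun b hb => ?_⟩
      simpa [ne_of_mem_of_not_mem hb ha, hb] using hv b
  have hfactor : ∀ j, ∑ x ∈ C j, (if x then q else 1 - q)
      = (if j = a then q else 1) * (if j ∈ T then 1 - q else 1) := by
    intro j
    by_cases hja : j = a
    · simp [C, hja, ha]
    · by_cases hjT : j ∈ T <;> simp [C, hja, hjT]
  unfold bernoulliVec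
  rw [hC, ← prod_univ_sum C fun _ b => if b then q else 1 - q]
  simp only [hfactor, prod_mul_distrib, prod_ite_eq', mem_univ, if_true, prod_ite_mem, univ_inter,
    prod_const]

lemma sum_transferMass_bernoulliVec_separatingVectors (q : ℝ) {a : ι} {T : Finset ι}
    (ha : a ∉ T) (hT : T.Nonempty) :
    ∑ v ∈ separatingVectors a T, transferMass (bernoulliVec q) (fun _ => false) (fun _ => true) v
      = q * (1 - q) ^ #T := by
  obtain ⟨b, hb⟩ := hT
  rw [← sum_bernoulliVec_separatingVectors q ha]
  refine sum_congr rfl fun v hv => transferMass_of_ne ?_ ?_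
  · rintro rfl
    simp [separatingVectors] at hv
  · rintro rfl
    simpa using ((mem_filter_univ _).1 hv).2 b hb

end Bernoulli

def pointedSubsets (ι : Type*) [Fintype ι] [DecidableEq ι] (m : ℕ) : Finset ((_ : ι) × Finset ι) :=
  univ.sigma fun a => powersetCard m (univ.erase a)

variable {ι : Type*} [Fintype ι] [DecidableEq ι]

lemma mem_pointedSubsets {m : ℕ} {y : (_ : ι) × Finset ι} :
    y ∈ pointedSubsets ι m ↔ y.1 ∉ y.2 ∧ #y.2 = m := by
  simp [pointedSubsets, mem_powersetCard, subset_iff]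

lemma card_pointedSubsets (m : ℕ) :
    #(pointedSubsets ι m) = Fintype.card ι * (Fintype.card ι - 1).choose m := by
  simp [pointedSubsets, card_powersetCard, card_erase_of_mem]

lemma mk_mem_pointedSubsets {d : ℕ} {i : Fin d → ι} (hi : Function.Injective i) (z : Fin d) :
    ⟨i z, (univ.erase z).image i⟩ ∈ pointedSubsets ι (d - 1) := by
  simp [pointedSubsets, mem_powersetCard, subset_iff, card_image_of_injective _ hi, hi.eq_iff]

lemma filter_mem_separatingVectors_image {t d : ℕ} (S : Fin t → ι → Bool) (i : Fin d → ι)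
    (z : Fin d) :
    ({k | S k ∈ separatingVectors (i z) ((univ.erase z).image i)} : Finset (Fin t))
      = ({k | S k (i z) = true} : Finset (Fin t)) \
          univ.biUnion fun j =>
            if j = z then ∅ else ({k | S k (i j) = true} : Finset (Fin t)) := by
  ext k
  simp only [separatingVectors, mem_filter_univ, mem_sdiff, mem_biUnion, mem_univ, true_and,
    forall_mem_image, mem_erase, and_true]
  refine and_congr_right fun _ => ?_
  simp only [not_exists]
  refine forall_congr' fun j => ?_
  by_cases hj : j = z <;> simp [hj]

lemma inv_exp_one_le_one_sub_inv_pow {d : ℕ} (hd : 1 ≤ d) :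
    (exp 1)⁻¹ ≤ (1 - (d : ℝ)⁻¹) ^ (d - 1) := by
  obtain ⟨m, rfl⟩ : ∃ m, d = m + 1 := ⟨d - 1, by omega⟩
  rcases Nat.eq_zero_or_pos m with rfl | hm
  · simpa using inv_le_one_of_one_le₀ (one_le_exp zero_le_one)
  have hm' : (0 : ℝ) < m := by exact_mod_cast hm
  have hbase : 1 - ((m + 1 : ℕ) : ℝ)⁻¹ = (1 + (m : ℝ)⁻¹)⁻¹ := by
    push_cast
    field_simp
    ring
  rw [hbase, Nat.add_sub_cancel, inv_pow]
  exact inv_anti₀ (by positivity) one_add_inv_pow_le_exp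

lemma one_sub_pow_add_mul_one_sub_pow_le_exp {p : ℝ} (hp₀ : 0 ≤ p) (hp : p ≤ 1 / 2) (t : ℕ) :
    (1 - p) ^ t + t * p * (1 - p) ^ (t - 1) ≤ exp (2 - p * t / 2) := by
  have hmerge : (1 - p) ^ t + t * p * (1 - p) ^ (t - 1) ≤ (1 + 2 * (p * t)) * (1 - p) ^ t := by
    rcases t with _ | s
    · simp
    have hpow : 0 ≤ (1 - p) ^ s := pow_nonneg (by linarith) s
    push_cast
    rw [pow_succ]
    nlinarith [mul_nonneg (mul_nonneg (by positivity : (0 : ℝ) ≤ s + 1) hp₀) hpow]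
  have hpow : (1 - p) ^ t ≤ exp (-(p * t)) := by
    calc (1 - p) ^ t ≤ exp (-p) ^ t := pow_le_pow_left₀ (by linarith) (one_sub_le_exp_neg p) t
      _ = exp (-(p * t)) := by rw [← exp_nat_mul]; ring_nf
  -- with `y = 2 + pt/2`: `exp y ≥ 1 + y + y²/2 ≥ 4y - 7 = 1 + 2pt`
  have hlin : 1 + 2 * (p * t) ≤ exp (2 + p * t / 2) := by
    have hx : 0 ≤ 2 + p * t / 2 := by positivity
    nlinarith [quadratic_le_exp_of_nonneg hx, sq_nonneg (p * t / 2 - 1)]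
  calc (1 - p) ^ t + t * p * (1 - p) ^ (t - 1) ≤ (1 + 2 * (p * t)) * (1 - p) ^ t := hmerge
    _ ≤ exp (2 + p * t / 2) * exp (-(p * t)) :=
        mul_le_mul hlin hpow (pow_nonneg (by linarith) t) (exp_pos _).le
    _ = exp (2 - p * t / 2) := by rw [← exp_add]; ring_nf

lemma mul_choose_le (n : ℕ) {d : ℕ} (hd : 1 ≤ d) :
    ((n * (n - 1).choose (d - 1) : ℕ) : ℝ) ≤ d * (n * exp 1 / d) ^ d := by
  rcases Nat.eq_zero_or_pos n with rfl | hn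
  · rw [zero_mul, Nat.cast_zero]; positivity
  have hd' : (0 : ℝ) < d := by exact_mod_cast hd
  have hchoose : n * (n - 1).choose (d - 1) = n.choose d * d := by
    have h := Nat.add_one_mul_choose_eq (n - 1) (d - 1)
    rwa [Nat.sub_add_cancel hn, Nat.sub_add_cancel hd] at h
  have hfact : (d : ℝ) ^ d / d.factorial ≤ exp 1 ^ d := by
    rw [← exp_nat_mul, mul_one]; exact pow_div_factorial_le_exp _ hd'.le d
  have hfact' : (n : ℝ) ^ d / d.factorial ≤ (n * exp 1 / d) ^ d := by
    calc (n : ℝ) ^ d / d.factorial = n ^ d * (d ^ d / d.factorial) / d ^ d := by field_simp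
      _ ≤ n ^ d * exp 1 ^ d / d ^ d := by gcongr
      _ = (n * exp 1 / d) ^ d := by rw [div_pow, mul_pow]
  rw [hchoose, Nat.cast_mul, mul_comm]
  exact mul_le_mul_of_nonneg_left ((Nat.choose_le_pow_div d n).trans hfact') hd'.le

lemma inv_exp_mul_le_inv_mul_one_sub_inv_pow {d : ℕ} (hd : 1 ≤ d) :
    (exp 1 * d)⁻¹ ≤ (d : ℝ)⁻¹ * (1 - (d : ℝ)⁻¹) ^ (d - 1) := by
  rw [mul_inv, mul_comm]
  exact mul_le_mul_of_nonneg_left (inv_exp_one_le_one_sub_inv_pow hd) (by positivity)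

lemma inv_mul_one_sub_inv_pow_le_half {d : ℕ} (hd : 2 ≤ d) :
    (d : ℝ)⁻¹ * (1 - (d : ℝ)⁻¹) ^ (d - 1) ≤ 1 / 2 := by
  have hd' : (2 : ℝ) ≤ d := by exact_mod_cast hd
  have hq₀ : (0 : ℝ) ≤ (d : ℝ)⁻¹ := by positivity
  have hq : (d : ℝ)⁻¹ ≤ 1 / 2 := by
    rw [inv_le_comm₀ (by positivity) (by norm_num)]; linarith
  have hpow : (1 - (d : ℝ)⁻¹) ^ (d - 1) ≤ 1 := pow_le_one₀ (by linarith) (by linarith)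
  nlinarith

lemma card_mul_tail_le {n d t : ℕ} (hn : 0 < n) (hd : 1 ≤ d) {p : ℝ}
    (hpe : (exp 1 * d)⁻¹ ≤ p) (hp : p ≤ 1 / 2) {ε : ℝ} (hε : 0 < ε)
    (htlb : 2 * exp 1 * ((d : ℝ) ^ 2 * log (n * exp 1 / d) + d * log (d / ε) + 2 * d) < t) :
    ((n * (n - 1).choose (d - 1) : ℕ) : ℝ) * ((1 - p) ^ t + t * p * (1 - p) ^ (t - 1)) ≤ ε := by
  set X : ℝ := n * exp 1 / d
  set K : ℝ := d * log X + log (d / ε)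
  have hX : 0 < X := by
    have : (0 : ℝ) < n := by exact_mod_cast hn
    positivity
  have hp₀ : 0 ≤ p := (inv_nonneg.2 (by positivity)).trans hpe
  have hpt : 2 * (K + 2) < p * t := by
    have htK : exp 1 * d * (2 * (K + 2)) < t := by
      have : 2 * exp 1 * ((d : ℝ) ^ 2 * log X + d * log (d / ε) + 2 * d)
          = exp 1 * d * (2 * (K + 2)) := by ring
      linarith
    calc 2 * (K + 2) = (exp 1 * d)⁻¹ * (exp 1 * d * (2 * (K + 2))) := by field_simp
      _ < (exp 1 * d)⁻¹ * t := by gcongr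
      _ ≤ p * t := by gcongr
  have hK : exp K = X ^ d * (d / ε) := by
    rw [exp_add, exp_nat_mul, exp_log hX, exp_log (by positivity)]
  calc ((n * (n - 1).choose (d - 1) : ℕ) : ℝ) * ((1 - p) ^ t + t * p * (1 - p) ^ (t - 1))
      ≤ (d * X ^ d) * exp (-K) := by
        have hp₁ : 0 ≤ 1 - p := by linarith
        refine mul_le_mul (mul_choose_le n hd) ?_ (by positivity) (by positivity)
        exact (one_sub_pow_add_mul_one_sub_pow_le_exp hp₀ hp t).trans
          (exp_le_exp.2 (by linarith))
    _ = ε := by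
        rw [exp_neg, hK]
        field_simp

end DoublyDisjunct

open DoublyDisjunct

open Classical in
/-- Theorem 5 (performance of the probabilistic construction): if
`t > 2e(d² ln(ne/d) + d ln(d/ε) + 2d)`, then there is a probability distribution `μ` on
`{0,1}^n` assigning probability 0 to the all-zero vector such that, when the rows of a
random `t × n` binary matrix `S` are drawn i.i.d. from `μ` and
`B j = {k : S k j = 1}`, the probability that the column design fails to be
`(d−1)`-doubly disjunct in the indexed sense (i.e. that some pairwise distinct indices
`i 0, …, i (d-1)` satisfy `|B (i 0) \ (B (i 1) ∪ ⋯ ∪ B (i (d-1)))| ≤ 1`) is at most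
`ε`. -/
theorem probabilistic_construction (n d t : ℕ) (hd : 2 ≤ d) (hdn : d ≤ n)
    (ε : ℝ) (hε0 : 0 < ε)
    (htlb : 2 * Real.exp 1 *
        ((d : ℝ) ^ 2 * Real.log (n * Real.exp 1 / d) + d * Real.log (d / ε) + 2 * d)
      < t) :
    ∃ μ : (Fin n → Bool) → ℝ,
      (∀ v, 0 ≤ μ v) ∧
      (∑ v : Fin n → Bool, μ v) = 1 ∧
      μ (fun _ => false) = 0 ∧
      (∑ S : Fin t → Fin n → Bool,
        if ∃ i : Fin d → Fin n, Function.Injective i ∧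
            ((Finset.univ.filter fun k => S k (i ⟨0, by omega⟩) = true) \
              Finset.univ.biUnion (fun j : Fin d =>
                if j = ⟨0, by omega⟩ then ∅
                else Finset.univ.filter fun k => S k (i j) = true)).card ≤ 1
        then ∏ k : Fin t, μ (S k) else 0) ≤ ε := by
  have hn : 0 < n := by omega
  have hq₀ : (0 : ℝ) ≤ (d : ℝ)⁻¹ := by positivity
  have hq₁ : (d : ℝ)⁻¹ ≤ 1 := inv_le_one_of_one_le₀ (by exact_mod_cast (show 1 ≤ d by omega))
  set p : ℝ := (d : ℝ)⁻¹ * (1 - (d : ℝ)⁻¹) ^ (d - 1)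
  set μ := transferMass (bernoulliVec (d : ℝ)⁻¹) (fun _ : Fin n => false) (fun _ => true)
  have hμ : ∑ v, μ v = 1 :=
    (sum_transferMass fun h => by simpa using congrFun h ⟨0, hn⟩).trans (sum_bernoulliVec _)
  have hμ₀ : ∀ v, 0 ≤ μ v := transferMass_nonneg (bernoulliVec_nonneg hq₀ hq₁)
  refine ⟨μ, hμ₀, hμ, transferMass_self, ?_⟩
  calc _ ≤ ∑ y ∈ pointedSubsets (Fin n) (d - 1), ∑ S : Fin t → Fin n → Bool,
          if #{k | S k ∈ separatingVectors y.1 y.2} ≤ 1 then ∏ k, μ (S k) else 0 :=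
        sum_ite_le_sum_sum_ite _ _ (fun S => prod_nonneg fun k _ => hμ₀ (S k))
          fun S ⟨i, hi, hS⟩ => ⟨_, mk_mem_pointedSubsets hi _,
            by rwa [filter_mem_separatingVectors_image]⟩
    _ = ∑ y ∈ pointedSubsets (Fin n) (d - 1), ((1 - p) ^ t + t * p * (1 - p) ^ (t - 1)) := by
        refine sum_congr rfl fun y hy => ?_
        obtain ⟨ha, hT⟩ := mem_pointedSubsets.1 hy
        rw [sum_prod_card_filter_mem_le_one hμ, sum_transferMass_bernoulliVec_separatingVectors _ ha
          (card_pos.1 (by omega)), hT]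
    _ ≤ ε := by
        rw [sum_const, card_pointedSubsets, nsmul_eq_mul, Fintype.card_fin]
        exact card_mul_tail_le hn (by omega) (inv_exp_mul_le_inv_mul_one_sub_inv_pow (by omega))
          (inv_mul_one_sub_inv_pow_le_half hd) hε0 htlb
end
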